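/- arXiv:1105.5505 — 6 statements merged into one kernel-verified Lean document; each statement's English description precedes it below -/
import Mathlib

section
/- For every prime p, every integer r ≥ 0, and every integer n ≥ 0, the Delannoy number D(n, p^r - 1) is congruent to (-1)^(n mod p^r) modulo p. -/
open Finset

/-- Delannoy numbers: `D n 0 = D 0 k = 1`, and
`D (n+1) (k+1) = D (n+1) k + D n k + D n (k+1)`. -/
def D : ℕ → ℕ → ℕ
  | _, 0 => 1
  | 0, _ => 1
  | n + 1, k + 1 => D (n + 1) k + D n k + D n (k + 1)
termination_by n k => n + k

lemma D_eq_sum (n k : ℕ) :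
    D n k = ∑ j ∈ Finset.range (k+1), n.choose j * k.choose j * 2^j := by
  induction n, k using D.induct with
  | case1 n => simp [D]
  | case2 x hx =>
    obtain ⟨k, rfl⟩ := Nat.exists_eq_succ_of_ne_zero (by simpa using hx)
    rw [show D 0 (k+1) = 1 from by simp [D]]
    rw [Finset.sum_eq_single_of_mem 0 (by simp)]
    · simp
    · intro j _ hj
      simp [Nat.choose_eq_zero_of_lt (Nat.pos_of_ne_zero hj)]
  | case3 n k ih1 ih2 ih3 =>
    rw [show D (n+1) (k+1) = D (n+1) k + D n k + D n (k+1) from by rw [D]]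
    rw [ih1, ih2, ih3]
    set S1 := ∑ j ∈ range (k+1), (n+1).choose j * k.choose j * 2^j with hS1
    set S2 := ∑ j ∈ range (k+1), n.choose j * k.choose j * 2^j with hS2
    set S3 := ∑ j ∈ range (k+1+1), n.choose j * (k+1).choose j * 2^j with hS3
    set A01 := ∑ i ∈ range (k+1), n.choose i * k.choose (i+1) * 2^(i+1) with hA01
    set A10 := ∑ i ∈ range (k+1), n.choose (i+1) * k.choose i * 2^(i+1) with hA10
    set A11 := ∑ i ∈ range (k+1), n.choose (i+1) * k.choose (i+1) * 2^(i+1) with hA11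
    set A01' := ∑ i ∈ range k, n.choose i * k.choose (i+1) * 2^(i+1) with hA01'
    set A11' := ∑ i ∈ range k, n.choose (i+1) * k.choose (i+1) * 2^(i+1) with hA11'
    have e01 : A01 = A01' := by
      rw [hA01, hA01', Finset.sum_range_succ, Nat.choose_succ_self, mul_zero, zero_mul, add_zero]
    have e11 : A11 = A11' := by
      rw [hA11, hA11', Finset.sum_range_succ, Nat.choose_succ_self, mul_zero, zero_mul, add_zero]
    have hgoal : ∑ j ∈ range (k+1+1), (n+1).choose j * (k+1).choose j * 2^j
        = (A11 + 1) * 2 + A01 + A10 + A11 + 1 := by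
      rw [Finset.sum_range_succ' _ (k+1)]
      have pt : ∀ i, (n+1).choose (i+1) * (k+1).choose (i+1) * 2^(i+1)
          = n.choose i * k.choose i * 2^(i+1) + (n.choose i * k.choose (i+1) * 2^(i+1)
            + (n.choose (i+1) * k.choose i * 2^(i+1)
            + n.choose (i+1) * k.choose (i+1) * 2^(i+1))) := by
        intro i; simp only [Nat.choose_succ_succ]; ring
      rw [Finset.sum_congr rfl (fun i _ => pt i), Finset.sum_add_distrib,
        Finset.sum_add_distrib, Finset.sum_add_distrib]
      have f2 : S2 = A11 + 1 := by
        rw [hS2, Finset.sum_range_succ' _ k]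
        simp [e11, hA11']
      have f0 : (∑ i ∈ range (k+1), n.choose i * k.choose i * 2^(i+1)) = (A11 + 1) * 2 := by
        rw [← f2, hS2, Finset.sum_mul]
        apply Finset.sum_congr rfl
        intro i _; ring
      rw [f0, ← hA01, ← hA10, ← hA11]
      simp; ring
    rw [hgoal]
    have f2 : S2 = A11 + 1 := by
      rw [hS2, Finset.sum_range_succ' _ k]
      simp [e11, hA11']
    have f3 : S3 = A10 + A11 + 1 := by
      rw [hS3, Finset.sum_range_succ' _ (k+1)]
      have pt : ∀ i, n.choose (i+1) * (k+1).choose (i+1) * 2^(i+1)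
          = n.choose (i+1) * k.choose i * 2^(i+1)
            + n.choose (i+1) * k.choose (i+1) * 2^(i+1) := by
        intro i; simp only [Nat.choose_succ_succ]; ring
      rw [Finset.sum_congr rfl (fun i _ => pt i), Finset.sum_add_distrib, ← hA10, ← hA11]
      simp
    have f4 : S1 = A01 + A11 + 1 := by
      rw [hS1, Finset.sum_range_succ' _ k]
      have pt : ∀ i, (n+1).choose (i+1) * k.choose (i+1) * 2^(i+1)
          = n.choose i * k.choose (i+1) * 2^(i+1)
            + n.choose (i+1) * k.choose (i+1) * 2^(i+1) := by
        intro i; simp only [Nat.choose_succ_succ]; ring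
      rw [Finset.sum_congr rfl (fun i _ => pt i), Finset.sum_add_distrib,
        ← hA01', ← hA11', ← e01, ← e11]
      simp
    omega

lemma choose_pow_sub_one (p : ℕ) (hp : p.Prime) (r : ℕ) :
    ∀ j, j < p^r → ((p^r - 1).choose j : ZMod p) = (-1)^j := by
  haveI : Fact p.Prime := ⟨hp⟩
  intro j
  induction j with
  | zero => simp
  | succ j ih =>
    intro hj
    have hq : 0 < p^r := pow_pos hp.pos r
    have pascal : (p^r).choose (j+1) = (p^r - 1).choose j + (p^r - 1).choose (j+1) := by
      conv_lhs => rw [← Nat.succ_pred_eq_of_pos hq]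
      exact Nat.choose_succ_succ _ _
    have hdvd : p ∣ (p^r).choose (j+1) :=
      hp.dvd_choose_pow (Nat.succ_ne_zero j) (Nat.ne_of_lt hj)
    have h0 : (((p^r).choose (j+1) : ℕ) : ZMod p) = 0 :=
      (ZMod.natCast_eq_zero_iff _ _).mpr hdvd
    have hc := congrArg (Nat.cast : ℕ → ZMod p) pascal
    push_cast at hc
    rw [h0, ih (by omega)] at hc
    linear_combination -hc

lemma choose_mod_pow (p : ℕ) (hp : p.Prime) (r n j : ℕ) (hj : j < p^r) :
    ((n.choose j : ZMod p)) = (((n % p^r).choose j : ZMod p)) := by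
  haveI : Fact p.Prime := ⟨hp⟩
  have h1 := (ZMod.intCast_eq_intCast_iff _ _ _).mpr
    (Choose.choose_modEq_choose_mul_prod_range_choose (n := n) (k := j) (p := p) r)
  have h2 := (ZMod.intCast_eq_intCast_iff _ _ _).mpr
    (Choose.choose_modEq_choose_mul_prod_range_choose (n := n % p^r) (k := j) (p := p) r)
  push_cast at h1 h2
  have hjq : j / p^r = 0 := Nat.div_eq_of_lt hj
  have hmq : (n % p^r) / p^r = 0 := Nat.div_eq_of_lt (Nat.mod_lt _ (pow_pos hp.pos r))
  rw [hjq] at h1 h2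
  rw [hmq] at h2
  have hdig : ∀ i ∈ range r, (((n % p^r) / p^i % p).choose (j / p^i % p) : ZMod p)
      = ((n / p^i % p).choose (j / p^i % p) : ZMod p) := by
    intro i hi
    rw [mem_range] at hi
    have hsplit : p^r = p^i * p^(r-i) := by rw [← pow_add]; congr 1; omega
    have : (n % p^r) / p^i = n / p^i % p^(r-i) := by
      rw [hsplit]; exact Nat.mod_mul_right_div_self n (p^i) (p^(r-i))
    rw [this, Nat.mod_mod_of_dvd _ (dvd_pow_self p (by omega : r - i ≠ 0))]
  rw [h1, h2, Finset.prod_congr rfl hdig]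
  simp

theorem delannoy_stmt_3 (p : ℕ) (hp : p.Prime) (r n : ℕ) :
    (D n (p ^ r - 1) : ℤ) ≡ (-1) ^ (n % p ^ r) [ZMOD (p : ℤ)] := by
  haveI : Fact p.Prime := ⟨hp⟩
  have hq : 0 < p ^ r := pow_pos hp.pos r
  rw [← ZMod.intCast_eq_intCast_iff]
  push_cast
  set b := n % p ^ r with hb
  have hblt : b < p ^ r := Nat.mod_lt _ hq
  have step1 : ((D n (p ^ r - 1) : ℕ) : ZMod p)
      = ∑ j ∈ range (p ^ r), (n.choose j : ZMod p) * ((p ^ r - 1).choose j : ZMod p) * 2 ^ j := by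
    rw [D_eq_sum, Nat.sub_add_cancel hq]
    push_cast
    rfl
  rw [step1]
  have step2 : ∀ j ∈ range (p ^ r),
      (n.choose j : ZMod p) * ((p ^ r - 1).choose j : ZMod p) * 2 ^ j
        = (b.choose j : ZMod p) * (-1) ^ j * 2 ^ j := by
    intro j hj
    rw [mem_range] at hj
    rw [choose_pow_sub_one p hp r j hj, choose_mod_pow p hp r n j hj]
  rw [Finset.sum_congr rfl step2]
  have step3 : ∑ j ∈ range (p ^ r), (b.choose j : ZMod p) * (-1) ^ j * 2 ^ j
      = ∑ j ∈ range (b + 1), (b.choose j : ZMod p) * (-1) ^ j * 2 ^ j := by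
    symm
    apply Finset.sum_subset
    · exact Finset.range_subset_range.mpr hblt
    · intro j _ hj
      rw [mem_range, not_lt] at hj
      rw [Nat.choose_eq_zero_of_lt (by omega)]
      simp
  rw [step3]
  have step4 : ∑ j ∈ range (b + 1), (b.choose j : ZMod p) * (-1) ^ j * 2 ^ j
      = ((-2 : ZMod p) + 1) ^ b := by
    rw [add_pow]
    apply Finset.sum_congr rfl
    intro j _
    rw [show (-2 : ZMod p) = (-1) * 2 from by ring, mul_pow, one_pow]
    ring
  rw [step4]
  norm_num
end

section
/- For all integers n ≥ k ≥ 0, the Delannoy number satisfies D(n,k) = Σ_{d=0}^{k} C(k,d)·C(n+k-d, k). -/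
lemma key (n k : ℕ) :
    ∑ d ∈ Finset.range (k+2), (k+1).choose d * (n+1+(k+1)-d).choose (k+1)
  = (∑ d ∈ Finset.range (k+1), k.choose d * (n+1+k-d).choose k)
  + (∑ d ∈ Finset.range (k+1), k.choose d * (n+k-d).choose k)
  + (∑ d ∈ Finset.range (k+2), (k+1).choose d * (n+(k+1)-d).choose (k+1)) := by
  have pascal : ∀ d ∈ Finset.range (k+2),
      (k+1).choose d * (n+1+(k+1)-d).choose (k+1)
    = (k+1).choose d * (n+k+1-d).choose k + (k+1).choose d * (n+(k+1)-d).choose (k+1) := by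
    intro d hd
    simp only [Finset.mem_range] at hd
    have h1 : n+1+(k+1)-d = (n+k+1-d)+1 := by omega
    have h2 : n+(k+1)-d = n+k+1-d := by omega
    rw [h1, h2, Nat.choose_succ_succ, Nat.mul_add]
  rw [Finset.sum_congr rfl pascal, Finset.sum_add_distrib]
  -- now handle B := ∑ d in range (k+2), (k+1).choose d * (n+k+1-d).choose k
  have hB : ∑ d ∈ Finset.range (k+2), (k+1).choose d * (n+k+1-d).choose k
      = (∑ d ∈ Finset.range (k+1), k.choose d * (n+1+k-d).choose k)
      + (∑ d ∈ Finset.range (k+1), k.choose d * (n+k-d).choose k) := by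
    rw [Finset.sum_range_succ']
    have e1 : ∀ e ∈ Finset.range (k+1),
        (k+1).choose (e+1) * (n+k+1-(e+1)).choose k
      = k.choose e * (n+k-e).choose k + k.choose (e+1) * (n+k-e).choose k := by
      intro e he
      simp only [Finset.mem_range] at he
      have : n+k+1-(e+1) = n+k-e := by omega
      rw [this, Nat.choose_succ_succ, Nat.add_mul]
    rw [Finset.sum_congr rfl e1, Finset.sum_add_distrib]
    have hT : (∑ e ∈ Finset.range (k+1), k.choose (e+1) * (n+k-e).choose k)
        + (k+1).choose 0 * (n+k+1-0).choose k
      = ∑ d ∈ Finset.range (k+1), k.choose d * (n+1+k-d).choose k := by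
      rw [Finset.sum_range_succ' (fun d => k.choose d * (n+1+k-d).choose k) k]
      rw [Finset.sum_range_succ]
      simp only [Nat.choose_succ_self, Nat.zero_mul, Nat.add_zero, Nat.choose_zero_right,
        Nat.one_mul]
      congr 1
      · apply Finset.sum_congr rfl
        intro e he
        simp only [Finset.mem_range] at he
        congr 2
        omega
      · congr 1
        omega
    omega
  omega

theorem delannoy_stmt_4 (n k : ℕ) (h : k ≤ n) :
    D n k = ∑ d ∈ Finset.range (k + 1), k.choose d * (n + k - d).choose k := by
  clear h
  induction n, k using D.induct with
  | case1 n => simp [D]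
  | case2 k hk =>
    have hk' : k ≠ 0 := fun h => hk h
    have hD : D 0 k = 1 := by
      cases k with
      | zero => simp [D]
      | succ m => simp [D]
    rw [hD, Finset.sum_eq_single 0]
    · simp
    · intro d hd hd0
      have : 0 + k - d < k := by simp only [Finset.mem_range] at hd; omega
      rw [Nat.choose_eq_zero_of_lt this, Nat.mul_zero]
    · simp
  | case3 n k ih1 ih2 ih3 =>
    rw [show D (n+1) (k+1) = D (n+1) k + D n k + D n (k+1) from by rw [D]]
    rw [ih1, ih2, ih3]
    exact (key n k).symm
end

section
/- For all integers n ≥ k ≥ 0, the Delannoy number satisfies D(n,k) = Σ_{d=0}^{k} C(n+d,d)·C(n, k-d). -/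
private def S (n k : ℕ) : ℕ := ∑ d ∈ Finset.range (k+1), (n+d).choose d * n.choose (k-d)
private def T (n k : ℕ) : ℕ := ∑ d ∈ Finset.range (k+1), (n+1+d).choose d * n.choose (k-d)

private lemma S_zero (n : ℕ) : S n 0 = 1 := by simp [S]

private lemma T_zero (n : ℕ) : T n 0 = 1 := by simp [T]

private lemma S_zero_left (k : ℕ) : S 0 k = 1 := by
  unfold S
  rw [Finset.sum_eq_single k]
  · simp
  · intro d hd hne
    have : k - d ≠ 0 := by
      simp [Finset.mem_range] at hd; omega
    rcases Nat.exists_eq_succ_of_ne_zero this with ⟨m, hm⟩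
    simp [hm]
  · intro h; simp [Finset.mem_range] at h

private lemma lem1 (n k : ℕ) : T n (k+1) = S n (k+1) + T n k := by
  unfold T S
  rw [Finset.sum_range_succ' (fun d => (n+1+d).choose d * n.choose (k+1-d)),
      Finset.sum_range_succ' (fun d => (n+d).choose d * n.choose (k+1-d))]
  have : ∀ e ∈ Finset.range (k+1),
      (n+1+(e+1)).choose (e+1) * n.choose (k+1-(e+1))
      = (n+(e+1)).choose (e+1) * n.choose (k+1-(e+1))
        + (n+1+e).choose e * n.choose (k-e) := by
    intro e he
    have h1 : n+1+(e+1) = (n+e+1) + 1 := by ring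
    have h2 : k+1-(e+1) = k-e := by omega
    rw [h1, h2, Nat.choose_succ_succ]
    have h3 : n+(e+1) = n+e+1 := by ring
    have h4 : n+1+e = n+e+1 := by ring
    rw [h3, h4]
    ring
  rw [Finset.sum_congr rfl this, Finset.sum_add_distrib]
  simp
  ring

private lemma lem2 (n k : ℕ) : S (n+1) (k+1) = T n (k+1) + T n k := by
  unfold T S
  rw [Finset.sum_range_succ (fun d => (n+1+d).choose d * (n+1).choose (k+1-d)),
      Finset.sum_range_succ (fun d => (n+1+d).choose d * n.choose (k+1-d))]
  have : ∀ d ∈ Finset.range (k+1),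
      (n+1+d).choose d * (n+1).choose (k+1-d)
      = (n+1+d).choose d * n.choose (k+1-d) + (n+1+d).choose d * n.choose (k-d) := by
    intro d hd
    have hd' : d ≤ k := by simpa [Nat.lt_succ_iff] using hd
    have h1 : k+1-d = (k-d)+1 := by omega
    rw [h1, Nat.choose_succ_succ]
    ring
  rw [Finset.sum_congr rfl this, Finset.sum_add_distrib]
  simp
  ring

private lemma lem3 (n k : ℕ) : 2 * T n k = S (n+1) k + S n k := by
  cases k with
  | zero => simp [S_zero, T_zero]
  | succ m =>
    rw [lem2, lem1]
    omega

private lemma Srec (n k : ℕ) : S (n+1) (k+1) = S (n+1) k + S n k + S n (k+1) := by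
  have := lem3 n k
  rw [lem2, lem1]
  omega

private lemma main (n k : ℕ) : D n k = S n k := by
  induction n, k using D.induct with
  | case1 n => rw [S_zero]; cases n <;> simp [D]
  | case2 k => rw [S_zero_left]; cases k <;> simp [D]
  | case3 n k ih1 ih2 ih3 =>
    unfold D
    rw [ih1, ih2, ih3, Srec]

theorem delannoy_stmt_7 (n k : ℕ) (h : k ≤ n) :
    D n k = ∑ d ∈ Finset.range (k + 1), (n + d).choose d * n.choose (k - d) := by
  rw [main]; rfl
end

section
/- For every prime p, every integer r ≥ 0, and every integer n ≥ 0, the Delannoy number D(n, p^r - 1) is not divisible by p. -/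
open Finset

lemma sum_choose_mul_choose_succ_succ {n k M : ℕ} (hM : k < M) :
    ∑ i ∈ range (M + 1), (n + 1).choose i * (k + 1).choose i * 2 ^ i =
      ∑ i ∈ range (M + 1), (n + 1).choose i * k.choose i * 2 ^ i +
      ∑ i ∈ range (M + 1), n.choose i * k.choose i * 2 ^ i +
      ∑ i ∈ range (M + 1), n.choose i * (k + 1).choose i * 2 ^ i := by
  -- Termwise, Pascal's rule leaves a discrepancy `2 aᵢ - 2 aᵢ₊₁` with `aᵢ = C(n,i) C(k,i) 2^i`;
  -- it telescopes to `2 a₀ - 2 a_M = 2`, which the three constant terms `i = 0` absorb.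
  have hterm : ∀ i ∈ range M,
      (n + 1).choose (i + 1) * (k + 1).choose (i + 1) * 2 ^ (i + 1) +
          2 * (n.choose (i + 1) * k.choose (i + 1) * 2 ^ (i + 1)) =
        (n + 1).choose (i + 1) * k.choose (i + 1) * 2 ^ (i + 1) +
          n.choose (i + 1) * k.choose (i + 1) * 2 ^ (i + 1) +
          n.choose (i + 1) * (k + 1).choose (i + 1) * 2 ^ (i + 1) +
          2 * (n.choose i * k.choose i * 2 ^ i) := by
    intro i _
    simp only [Nat.choose_succ_succ, pow_succ]
    ring
  have hshift : ∑ i ∈ range M, n.choose (i + 1) * k.choose (i + 1) * 2 ^ (i + 1) + 1 =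
      ∑ i ∈ range M, n.choose i * k.choose i * 2 ^ i := by
    have h := sum_range_succ' (fun i ↦ n.choose i * k.choose i * 2 ^ i) M
    simp only [sum_range_succ, Nat.choose_eq_zero_of_lt hM] at h
    simpa using h.symm
  have hsum := sum_congr rfl hterm
  simp only [sum_add_distrib, ← mul_sum] at hsum
  simp only [sum_range_succ' _ M, Nat.choose_zero_right]
  omega

theorem D_eq_sum_range {n k N : ℕ} (hN : k < N) :
    D n k = ∑ i ∈ range N, n.choose i * k.choose i * 2 ^ i := by
  obtain ⟨M, rfl⟩ : ∃ M, N = M + 1 := ⟨N - 1, by omega⟩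
  induction n generalizing k M with
  | zero => cases k <;> simp [D, sum_range_succ']
  | succ n ihn =>
    induction k generalizing M with
    | zero => simp [D, sum_range_succ']
    | succ k ihk =>
      rw [D, ihk M (by omega), ihn M (by omega), ihn M hN,
        sum_choose_mul_choose_succ_succ (by omega)]

section

variable {p : ℕ} [hp : Fact p.Prime]

theorem natCast_choose_prime_pow_sub_one {r i : ℕ} (hi : i < p ^ r) :
    ((p ^ r - 1).choose i : ZMod p) = (-1) ^ i := by
  induction i with
  | zero => simp
  | succ i ih =>
    have hpascal : (p ^ r - 1).choose i + (p ^ r - 1).choose (i + 1) = (p ^ r).choose (i + 1) := by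
      rw [← Nat.choose_succ_succ', Nat.sub_add_cancel (Nat.one_le_pow _ _ hp.out.pos)]
    have hdvd : p ∣ (p ^ r).choose (i + 1) := hp.out.dvd_choose_pow (by omega) (by omega)
    have hzero : ((p ^ r - 1).choose i : ZMod p) + ((p ^ r - 1).choose (i + 1) : ℕ) = 0 := by
      rw [← Nat.cast_add, hpascal, ZMod.natCast_eq_zero_iff]
      exact hdvd
    rw [ih (by omega)] at hzero
    linear_combination hzero

theorem natCast_choose_mod_prime_pow (n : ℕ) {r i : ℕ} (hi : i < p ^ r) :
    (n.choose i : ZMod p) = ((n % p ^ r).choose i : ZMod p) := by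
  induction r generalizing n i with
  | zero => simp_all
  | succ r ih =>
    have lucas (m : ℕ) : (m.choose i : ZMod p) =
        ((m % p).choose (i % p) * (m / p).choose (i / p) : ℕ) :=
      (ZMod.natCast_eq_natCast_iff _ _ _).2 Choose.choose_modEq_choose_mod_mul_choose_div_nat
    have hmod : n % p ^ (r + 1) % p = n % p :=
      Nat.mod_mod_of_dvd n (dvd_pow_self p r.succ_ne_zero)
    have hdiv : n % p ^ (r + 1) / p = n / p % p ^ r := by
      rw [pow_succ', Nat.mod_mul_right_div_self]
    have hi' : i / p < p ^ r := Nat.div_lt_of_lt_mul (by rwa [← pow_succ'])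
    rw [lucas, lucas, hmod, hdiv, Nat.cast_mul, Nat.cast_mul, ih (n / p) hi']

end

theorem sum_range_choose_mul_pow_of_lt {R : Type*} [CommSemiring R] (x : R) {b N : ℕ}
    (hb : b < N) : ∑ i ∈ range N, (b.choose i : R) * x ^ i = (1 + x) ^ b := by
  rw [add_comm, add_pow, ← sum_subset (range_subset_range.2 hb)]
  · exact sum_congr rfl fun i _ ↦ by ring
  · intro i _ hi
    rw [Nat.choose_eq_zero_of_lt (by simpa using hi), Nat.cast_zero, zero_mul]

theorem delannoy_stmt_9 (p : ℕ) (hp : p.Prime) (r n : ℕ) :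
    ¬ p ∣ D n (p ^ r - 1) := by
  have := Fact.mk hp
  have hq : 0 < p ^ r := pow_pos hp.pos r
  have hmod : (D n (p ^ r - 1) : ZMod p) = (-1) ^ (n % p ^ r) := by
    calc (D n (p ^ r - 1) : ZMod p)
        = ∑ i ∈ range (p ^ r), (n.choose i : ZMod p) * (p ^ r - 1).choose i * 2 ^ i := by
          rw [D_eq_sum_range (N := p ^ r) (by omega)]
          push_cast
          rfl
      _ = ∑ i ∈ range (p ^ r), ((n % p ^ r).choose i : ZMod p) * (-2) ^ i :=
          sum_congr rfl fun i hi ↦ by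
            rw [mem_range] at hi
            rw [natCast_choose_mod_prime_pow n hi, natCast_choose_prime_pow_sub_one hi,
              neg_pow 2]
            ring
      _ = (-1) ^ (n % p ^ r) := by
          rw [sum_range_choose_mul_pow_of_lt _ (Nat.mod_lt n hq)]
          norm_num
  rw [← ZMod.natCast_eq_zero_iff, hmod]
  exact pow_ne_zero _ (neg_ne_zero.2 one_ne_zero)
end

section
/- The Delannoy polynomials defined by P_0(x) = 1, P_1(x) = x + 1, and P_{n+1}(x) = (x+1)·P_n(x) + x·P_{n-1}(x) have the Delannoy numbers as coefficients: the coefficient of x^k in P_n(x) equals D(n - k, k) for 0 ≤ k ≤ n (equivalently, P_n(x) = Σ_k D(n-k,k) x^k). -/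
open Polynomial

/-- The Delannoy polynomials. -/
noncomputable def P : ℕ → Polynomial ℤ
  | 0 => 1
  | 1 => X + 1
  | n + 2 => (X + 1) * P (n + 1) + X * P n

lemma D_zero_left (k : ℕ) : D 0 k = 1 := by cases k <;> simp [D]

lemma D_rec (a b : ℕ) : D (a+1) (b+1) = D (a+1) b + D a b + D a (b+1) := by rw [D]

lemma P_coeff : ∀ n k : ℕ, (P n).coeff k = if k ≤ n then (D (n - k) k : ℤ) else 0
  | 0, k => by
    cases k with
    | zero => simp [P, D]
    | succ k => simp [P, Polynomial.coeff_one]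
  | 1, k => by
    match k with
    | 0 => simp [P, D]
    | 1 => simp [P, D, Polynomial.coeff_one, Polynomial.coeff_X]
    | (k+2) => simp [P, Polynomial.coeff_one, Polynomial.coeff_X]
  | n + 2, k => by
    have h1 := P_coeff (n + 1)
    have h0 := P_coeff n
    cases k with
    | zero =>
      show ((X + 1) * P (n + 1) + X * P n).coeff 0 = _
      rw [Polynomial.coeff_add, Polynomial.mul_coeff_zero, Polynomial.mul_coeff_zero]
      simp [h1 0, h0 0, D]
    | succ k =>
      have expand : (P (n + 2)).coeff (k + 1)
          = (P (n + 1)).coeff k + (P (n + 1)).coeff (k + 1) + (P n).coeff k := by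
        show ((X + 1) * P (n + 1) + X * P n).coeff (k + 1) = _
        rw [Polynomial.coeff_add, add_mul, Polynomial.coeff_add, one_mul,
          Polynomial.coeff_X_mul, Polynomial.coeff_X_mul]
      rw [expand, h1 k, h1 (k + 1), h0 k]
      rcases Nat.lt_or_ge n k with hnk | hnk
      · -- k > n
        rcases Nat.lt_or_ge (n+1) k with h' | h'
        · -- k > n+1 : everything 0
          rw [if_neg (by omega), if_neg (by omega), if_neg (by omega), if_neg (by omega)]
          ring
        · -- k = n+1
          have hk1 : k = n + 1 := by omega
          subst hk1
          rw [if_pos (le_refl (n+1)), if_neg (by omega), if_neg (by omega),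
            if_pos (by omega)]
          have e1 : n + 1 - (n + 1) = 0 := by omega
          have e2 : n + 2 - (n + 1 + 1) = 0 := by omega
          rw [e1, e2, D_zero_left, D_zero_left]
          ring
      · -- k ≤ n : all ifs true, use D recurrence
        rw [if_pos (by omega), if_pos (by omega), if_pos (by omega), if_pos (by omega)]
        have e1 : n + 1 - k = (n - k) + 1 := by omega
        have e2 : n + 1 - (k + 1) = n - k := by omega
        have e3 : n + 2 - (k + 1) = (n - k) + 1 := by omega
        rw [e1, e2, e3, D_rec]
        push_cast
        ring

theorem delannoy_stmt_15 (n k : ℕ) (hk : k ≤ n) :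
    (P n).coeff k = (D (n - k) k : ℤ) := by
  rw [P_coeff, if_pos hk]
end

section
/- For θ ∈ (0,1], the function G(θ) = log((√(1+θ²)+θ)·((√(1+θ²)+1)/θ)^θ) - log 2 - θ·log 3 attains its maximum value 0 at θ = 3/4; in particular (√(1+θ²)+θ)·((√(1+θ²)+1)/θ)^θ ≤ 2·3^θ for all θ ∈ (0,1], with equality at θ = 3/4. -/
noncomputable def Adel (θ : ℝ) : ℝ :=
  (Real.sqrt (1 + θ ^ 2) + θ) * ((Real.sqrt (1 + θ ^ 2) + 1) / θ) ^ θ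

noncomputable def Gdel (θ : ℝ) : ℝ :=
  Real.log (Adel θ) - Real.log 2 - θ * Real.log 3

/-!
With `s = √(1 + θ²)`, for `θ > 0` one has
`G θ = arsinh θ + θ log (s + 1) - θ log θ - log 2 - θ log 3`, and since `s² = 1 + θ²` the
derivative collapses to `log (s + 1) - log (3θ)`. Now `s + 1 ≥ 3θ` exactly when `θ ≤ 3/4`, so `G`
increases up to `3/4` and decreases after it. At `θ = 3/4` we have `s = 5/4` and the product is
`2 · 3^(3/4)`, so the maximum is `0`, which is the inequality `A θ ≤ 2 · 3^θ` after exponentiating.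
-/

open Real Set

lemma one_le_sqrt_one_add_sq (θ : ℝ) : 1 ≤ √(1 + θ ^ 2) :=
  one_le_sqrt.mpr (by nlinarith [sq_nonneg θ])

lemma Adel_pos {θ : ℝ} (hθ : 0 < θ) : 0 < Adel θ := by
  have := one_le_sqrt_one_add_sq θ
  unfold Adel
  positivity

lemma Gdel_eq_log_sub (θ : ℝ) : Gdel θ = log (Adel θ) - log (2 * 3 ^ θ) := by
  rw [Gdel, log_mul two_ne_zero (by positivity), log_rpow three_pos]
  ring

lemma Adel_le_iff_Gdel_nonpos {θ : ℝ} (hθ : 0 < θ) : Adel θ ≤ 2 * 3 ^ θ ↔ Gdel θ ≤ 0 := by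
  rw [Gdel_eq_log_sub, sub_nonpos, log_le_log_iff (Adel_pos hθ) (by positivity)]

lemma Gdel_eq_arsinh_add {θ : ℝ} (hθ : 0 < θ) :
    Gdel θ = arsinh θ + θ * log (√(1 + θ ^ 2) + 1) - θ * log θ - log 2 - θ * log 3 := by
  have := one_le_sqrt_one_add_sq θ
  rw [Gdel, Adel, arsinh, log_mul (by positivity) (by positivity), log_rpow (by positivity),
    log_div (by positivity) hθ.ne', add_comm θ]
  ring

lemma hasDerivAt_Gdel {θ : ℝ} (hθ : 0 < θ) :
    HasDerivAt Gdel (log (√(1 + θ ^ 2) + 1) - log (3 * θ)) θ := by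
  have hs_sq : √(1 + θ ^ 2) ^ 2 = 1 + θ ^ 2 := sq_sqrt (by positivity)
  have hs' : HasDerivAt (fun x ↦ √(1 + x ^ 2)) (θ / √(1 + θ ^ 2)) θ := by
    convert ((hasDerivAt_pow 2 θ).const_add 1).sqrt (by positivity) using 1
    field_simp
    ring
  have hF := ((((hasDerivAt_arsinh θ).add ((hasDerivAt_id θ).mul
    ((hs'.add_const 1).log (by positivity)))).sub (hasDerivAt_mul_log hθ.ne')).sub_const
    (log 2)).sub ((hasDerivAt_id θ).mul_const (log 3))
  refine (hF.congr_of_eventuallyEq ?_).congr_deriv ?_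
  · filter_upwards [eventually_gt_nhds hθ] with x hx
    exact Gdel_eq_arsinh_add hx
  · -- `1 / s + θ² / (s (s + 1)) = 1` for `s = √(1 + θ²)`, since `s² = 1 + θ²`
    rw [log_mul three_ne_zero hθ.ne', id]
    field_simp
    linear_combination -hs_sq

lemma three_mul_le_sqrt_one_add_sq_add_one {θ : ℝ} (hθ : θ ≤ 3 / 4) :
    3 * θ ≤ √(1 + θ ^ 2) + 1 := by
  have hs_sq : √(1 + θ ^ 2) ^ 2 = 1 + θ ^ 2 := sq_sqrt (by positivity)
  nlinarith [sqrt_nonneg (1 + θ ^ 2), sq_nonneg (√(1 + θ ^ 2) - (3 * θ - 1))]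

lemma sqrt_one_add_sq_add_one_le_three_mul {θ : ℝ} (hθ : 3 / 4 ≤ θ) :
    √(1 + θ ^ 2) + 1 ≤ 3 * θ := by
  rw [← le_sub_iff_add_le, sqrt_le_left (by linarith)]
  nlinarith

lemma isMaxOn_Gdel : IsMaxOn Gdel (Ioc 0 1) (3 / 4) := by
  have hderiv : ∀ x ∈ Ioi (0 : ℝ), HasDerivAt Gdel (log (√(1 + x ^ 2) + 1) - log (3 * x)) x :=
    fun x hx ↦ hasDerivAt_Gdel hx
  have hdiff : DifferentiableOn ℝ Gdel (Ioi 0) :=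
    fun x hx ↦ (hderiv x hx).differentiableAt.differentiableWithinAt
  refine isMaxOn_Ioc_of_deriv (hderiv _ (by norm_num)).continuousAt
    (hderiv _ (by norm_num)).continuousAt (hdiff.mono Ioo_subset_Ioi_self)
    (hdiff.mono fun x hx ↦ lt_trans (by norm_num) hx.1) (fun x hx ↦ ?_) (fun x hx ↦ ?_)
  · rw [(hasDerivAt_Gdel hx.1).deriv, sub_nonneg]
    exact log_le_log (by linarith [hx.1]) (three_mul_le_sqrt_one_add_sq_add_one hx.2.le)
  · rw [(hasDerivAt_Gdel (by linarith [hx.1])).deriv, sub_nonpos]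
    exact log_le_log (by positivity) (sqrt_one_add_sq_add_one_le_three_mul hx.1.le)

lemma Adel_three_fourths : Adel (3 / 4) = 2 * 3 ^ (3 / 4 : ℝ) := by
  rw [Adel, show (1 : ℝ) + (3 / 4) ^ 2 = (5 / 4) ^ 2 by norm_num, sqrt_sq (by norm_num)]
  norm_num

lemma Gdel_three_fourths : Gdel (3 / 4) = 0 := by
  rw [Gdel_eq_log_sub, Adel_three_fourths, sub_self]

theorem delannoy_stmt_17 :
    (∀ θ : ℝ, 0 < θ → θ ≤ 1 → Gdel θ ≤ Gdel (3 / 4)) ∧ Gdel (3 / 4) = 0 ∧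
    (∀ θ : ℝ, 0 < θ → θ ≤ 1 → Adel θ ≤ 2 * (3 : ℝ) ^ θ) ∧
    Adel (3 / 4) = 2 * (3 : ℝ) ^ ((3 : ℝ) / 4) := by
  have hmax : ∀ θ : ℝ, 0 < θ → θ ≤ 1 → Gdel θ ≤ Gdel (3 / 4) :=
    fun θ h₀ h₁ ↦ isMaxOn_Gdel ⟨h₀, h₁⟩
  refine ⟨hmax, Gdel_three_fourths, fun θ h₀ h₁ ↦ ?_, Adel_three_fourths⟩
  rw [Adel_le_iff_Gdel_nonpos h₀, ← Gdel_three_fourths]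
  exact hmax θ h₀ h₁
end
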